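/- For every strongly regular four-valued matrix M, the induced consequence relation lies strictly between that of positive classical logic and classical logic over the connectives ¬, ∧, ∨, →, ⊥: ⊨_{CL⁺} ⊊ ⊨_M ⊊ ⊨_{CL}. Moreover, for every propositional variable p, {p} ⊭_M {¬p} and {¬p} ⊭_M {p}. -/

import Mathlib

namespace BD17

/-- The four truth values of Belnap-Dunn logic:
`t` (true), `f` (false), `b` (both true and false), `n` (neither true nor false). -/
inductive V4 : Type
  | t | f | b | n
deriving DecidableEq, Repr

namespace V4

/-- `a` lies above truth in the Belnap-Dunn bilattice (i.e. `a ∈ {t, b}`). -/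
def hasT : V4 → Bool
  | t => true
  | b => true
  | _ => false

/-- `a` lies above falsity in the Belnap-Dunn bilattice (i.e. `a ∈ {f, b}`). -/
def hasF : V4 → Bool
  | f => true
  | b => true
  | _ => false

def ofTF : Bool → Bool → V4
  | true, true => b
  | true, false => t
  | false, true => f
  | false, false => n

/-- Interpretation of ¬: swaps `t` and `f`, fixes `b` and `n`. -/
def neg4 : V4 → V4
  | t => f
  | f => t
  | b => b
  | n => n

/-- Interpretation of ∧: greatest lower bound in the lattice order on `V4`
with `f` least, `t` greatest, `b` and `n` incomparable. -/
def and4 (x y : V4) : V4 := ofTF (x.hasT && y.hasT) (x.hasF || y.hasF)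

/-- Interpretation of ∨: least upper bound in the lattice order on `V4`
with `f` least, `t` greatest, `b` and `n` incomparable. -/
def or4 (x y : V4) : V4 := ofTF (x.hasT || y.hasT) (x.hasF && y.hasF)

/-- Interpretation of →: `a₁ → a₂ = t` if `a₁ ∉ {t, b}`, and `a₂` otherwise. -/
def imp4 (x y : V4) : V4 := if x = t ∨ x = b then y else t

/-- The designated truth values: `t` and `b`. -/
def desig (x : V4) : Prop := x = t ∨ x = b

end V4

/-- Formulas over the connectives ¬, ∧, ∨, →, ⊥. -/
inductive Fm : Type
  | var : ℕ → Fm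
  | neg : Fm → Fm
  | and : Fm → Fm → Fm
  | or : Fm → Fm → Fm
  | imp : Fm → Fm → Fm
  | bot : Fm
deriving DecidableEq

/-- The valuation, in the four-valued matrix interpreting ¬ by `In`, ∧ by `Ia`,
∨ by `Io`, → by `Ii` and ⊥ by `f`, determined by an assignment of truth values
to the propositional variables. -/
def valM (In : V4 → V4) (Ia Io Ii : V4 → V4 → V4) (v : ℕ → V4) : Fm → V4
  | .var p => v p
  | .neg A => In (valM In Ia Io Ii v A)
  | .and A B => Ia (valM In Ia Io Ii v A) (valM In Ia Io Ii v B)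
  | .or A B => Io (valM In Ia Io Ii v A) (valM In Ia Io Ii v B)
  | .imp A B => Ii (valM In Ia Io Ii v A) (valM In Ia Io Ii v B)
  | .bot => V4.f

/-- The consequence relation induced by the four-valued matrix with truth
functions `In`, `Ia`, `Io`, `Ii` (and `⊥ = f`), designated values `{t, b}`. -/
def ConM (In : V4 → V4) (Ia Io Ii : V4 → V4 → V4) (Γ Δ : Set Fm) : Prop :=
  ∀ v : ℕ → V4, (∀ A ∈ Γ, V4.desig (valM In Ia Io Ii v A)) →
    ∃ B ∈ Δ, V4.desig (valM In Ia Io Ii v B)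

/-- The two-valued Boolean valuation determined by an assignment of Boolean
values to the propositional variables. -/
def valB (v : ℕ → Bool) : Fm → Bool
  | .var p => v p
  | .neg A => !(valB v A)
  | .and A B => valB v A && valB v B
  | .or A B => valB v A || valB v B
  | .imp A B => !(valB v A) || valB v B
  | .bot => false

/-- The consequence relation of classical propositional logic CL over
¬, ∧, ∨, →, ⊥, induced by the two-valued Boolean matrix. -/
def ConCL (Γ Δ : Set Fm) : Prop :=
  ∀ v : ℕ → Bool, (∀ A ∈ Γ, valB v A = true) → ∃ B ∈ Δ, valB v B = true

/-- A valuation of positive classical logic CL⁺ over this language: a Boolean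
valuation that respects ∧, ∨, →, ⊥ but is unconstrained on negated formulas
(¬ obeys no laws in the positive fragment). -/
def IsPosVal (ν : Fm → Bool) : Prop :=
  ν Fm.bot = false ∧
  (∀ A B : Fm, ν (Fm.and A B) = (ν A && ν B)) ∧
  (∀ A B : Fm, ν (Fm.or A B) = (ν A || ν B)) ∧
  (∀ A B : Fm, ν (Fm.imp A B) = (!(ν A) || ν B))

/-- The consequence relation of positive classical logic CL⁺ over
¬, ∧, ∨, →, ⊥. -/
def ConCLp (Γ Δ : Set Fm) : Prop :=
  ∀ ν : Fm → Bool, IsPosVal ν → (∀ A ∈ Γ, ν A = true) → ∃ B ∈ Δ, ν B = true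

/-!
Designation in `M` behaves classically on `∧`, `∨`, `→` and `⊥`, so the designation pattern of
an `M`-valuation is a valuation of positive classical logic, which gives `⊨_{CL⁺} ⊆ ⊨_M`.
Since `{t, f}` is a subalgebra of `M` isomorphic to the Boolean matrix, every classical valuation
is an `M`-valuation, which gives `⊨_M ⊆ ⊨_{CL}`. Both inclusions are strict: `¬⊥` is valid in `M`
but a positive valuation may refute it, and `p ∧ ¬p` explodes classically but takes the
designated value `b` when `p` does.
-/

namespace V4

instance : DecidablePred desig := fun x => inferInstanceAs (Decidable (x = t ∨ x = b))

@[simp] lemma desig_t : desig t := Or.inl rfl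

@[simp] lemma desig_b : desig b := Or.inr rfl

@[simp] lemma not_desig_f : ¬ desig f := by decide

def ofBool : Bool → V4
  | true => t
  | false => f

@[simp] lemma desig_ofBool (x : Bool) : desig (ofBool x) ↔ x = true := by
  cases x <;> simp [ofBool]

lemma ofBool_eq_t_or_f (x : Bool) : ofBool x = t ∨ ofBool x = f := by
  cases x <;> simp [ofBool]

lemma eq_ofBool_iff {a : V4} (ha : a = t ∨ a = f) (x : Bool) :
    a = ofBool x ↔ (desig a ↔ x = true) := by
  rcases ha with rfl | rfl <;> cases x <;> simp [ofBool]

end V4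

def negFalseVal : Fm → Bool
  | .var _ => false
  | .neg _ => false
  | .and A B => negFalseVal A && negFalseVal B
  | .or A B => negFalseVal A || negFalseVal B
  | .imp A B => !(negFalseVal A) || negFalseVal B
  | .bot => false

lemma isPosVal_negFalseVal : IsPosVal negFalseVal :=
  ⟨rfl, fun _ _ => rfl, fun _ _ => rfl, fun _ _ => rfl⟩

lemma not_conCLp_empty_neg_bot : ¬ ConCLp ∅ {Fm.neg Fm.bot} := by
  intro h
  obtain ⟨B, rfl, hB⟩ := h negFalseVal isPosVal_negFalseVal (by simp)
  exact Bool.false_ne_true hB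

lemma conCL_and_neg_var_empty (p : ℕ) : ConCL {Fm.and (Fm.var p) (Fm.neg (Fm.var p))} ∅ := by
  intro v hΓ
  simpa [valB] using hΓ _ rfl

section Matrix

variable {In : V4 → V4} {Ia Io Ii : V4 → V4 → V4}

lemma isPosVal_desig_valM
    (hand : ∀ a₁ a₂, V4.desig (Ia a₁ a₂) ↔ (V4.desig a₁ ∧ V4.desig a₂))
    (hor : ∀ a₁ a₂, V4.desig (Io a₁ a₂) ↔ (V4.desig a₁ ∨ V4.desig a₂))
    (himp : ∀ a₁ a₂, V4.desig (Ii a₁ a₂) ↔ (¬ V4.desig a₁ ∨ V4.desig a₂)) (v : ℕ → V4) :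
    IsPosVal fun A => decide (V4.desig (valM In Ia Io Ii v A)) :=
  ⟨by simp [valM], fun A B => by simp [valM, hand], fun A B => by simp [valM, hor],
    fun A B => by simp [valM, himp]⟩

lemma conM_of_conCLp
    (hand : ∀ a₁ a₂, V4.desig (Ia a₁ a₂) ↔ (V4.desig a₁ ∧ V4.desig a₂))
    (hor : ∀ a₁ a₂, V4.desig (Io a₁ a₂) ↔ (V4.desig a₁ ∨ V4.desig a₂))
    (himp : ∀ a₁ a₂, V4.desig (Ii a₁ a₂) ↔ (¬ V4.desig a₁ ∨ V4.desig a₂))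
    {Γ Δ : Set Fm} (h : ConCLp Γ Δ) : ConM In Ia Io Ii Γ Δ := by
  intro v hΓ
  obtain ⟨B, hB, hBv⟩ := h _ (isPosVal_desig_valM hand hor himp v)
    fun A hA => decide_eq_true (hΓ A hA)
  exact ⟨B, hB, of_decide_eq_true hBv⟩

lemma valM_ofBool_comp
    (hneg : ∀ a, V4.desig (In a) ↔ (a = V4.f ∨ a = V4.b))
    (hand : ∀ a₁ a₂, V4.desig (Ia a₁ a₂) ↔ (V4.desig a₁ ∧ V4.desig a₂))
    (hor : ∀ a₁ a₂, V4.desig (Io a₁ a₂) ↔ (V4.desig a₁ ∨ V4.desig a₂))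
    (himp : ∀ a₁ a₂, V4.desig (Ii a₁ a₂) ↔ (¬ V4.desig a₁ ∨ V4.desig a₂))
    (hcn : ∀ a, (a = V4.t ∨ a = V4.f) → (In a = V4.t ∨ In a = V4.f))
    (hca : ∀ a₁ a₂, (a₁ = V4.t ∨ a₁ = V4.f) → (a₂ = V4.t ∨ a₂ = V4.f) →
      (Ia a₁ a₂ = V4.t ∨ Ia a₁ a₂ = V4.f))
    (hco : ∀ a₁ a₂, (a₁ = V4.t ∨ a₁ = V4.f) → (a₂ = V4.t ∨ a₂ = V4.f) →
      (Io a₁ a₂ = V4.t ∨ Io a₁ a₂ = V4.f))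
    (hci : ∀ a₁ a₂, (a₁ = V4.t ∨ a₁ = V4.f) → (a₂ = V4.t ∨ a₂ = V4.f) →
      (Ii a₁ a₂ = V4.t ∨ Ii a₁ a₂ = V4.f)) (v : ℕ → Bool) (A : Fm) :
    valM In Ia Io Ii (V4.ofBool ∘ v) A = V4.ofBool (valB v A) := by
  have cl := V4.ofBool_eq_t_or_f
  induction A with
  | var p => rfl
  | bot => rfl
  | neg A ih =>
    rw [valM, ih, V4.eq_ofBool_iff (hcn _ (cl _)), hneg]
    cases h : valB v A <;> simp [valB, h, V4.ofBool]
  | and A B ihA ihB =>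
    rw [valM, ihA, ihB, V4.eq_ofBool_iff (hca _ _ (cl _) (cl _)), hand]
    simp [valB]
  | or A B ihA ihB =>
    rw [valM, ihA, ihB, V4.eq_ofBool_iff (hco _ _ (cl _) (cl _)), hor]
    simp [valB]
  | imp A B ihA ihB =>
    rw [valM, ihA, ihB, V4.eq_ofBool_iff (hci _ _ (cl _) (cl _)), himp]
    simp [valB, Bool.or_eq_true]

lemma conCL_of_conM
    (hval : ∀ v A, valM In Ia Io Ii (V4.ofBool ∘ v) A = V4.ofBool (valB v A))
    {Γ Δ : Set Fm} (h : ConM In Ia Io Ii Γ Δ) : ConCL Γ Δ := by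
  intro v hΓ
  obtain ⟨B, hB, hBv⟩ := h (V4.ofBool ∘ v) fun A hA => by simp [hval, hΓ A hA]
  exact ⟨B, hB, by simpa [hval] using hBv⟩

lemma conM_empty_neg_bot (hf : V4.desig (In V4.f)) : ConM In Ia Io Ii ∅ {Fm.neg Fm.bot} :=
  fun _ _ => ⟨_, rfl, hf⟩

lemma not_conM_and_neg_var_empty (hb : V4.desig (In V4.b))
    (hand : ∀ a₁ a₂, V4.desig (Ia a₁ a₂) ↔ (V4.desig a₁ ∧ V4.desig a₂)) (p : ℕ) :
    ¬ ConM In Ia Io Ii {Fm.and (Fm.var p) (Fm.neg (Fm.var p))} ∅ := by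
  intro h
  obtain ⟨B, hB, -⟩ := h (fun _ => V4.b) fun A hA => by
    rw [hA, valM, hand]
    exact ⟨V4.desig_b, hb⟩
  exact hB

lemma not_conM_var_neg_var (ht : ¬ V4.desig (In V4.t)) (p : ℕ) :
    ¬ ConM In Ia Io Ii {Fm.var p} {Fm.neg (Fm.var p)} := by
  intro h
  obtain ⟨B, rfl, hB⟩ := h (fun _ => V4.t) fun A hA => by rw [hA]; exact V4.desig_t
  exact ht hB

lemma not_conM_neg_var_var (hf : V4.desig (In V4.f)) (p : ℕ) :
    ¬ ConM In Ia Io Ii {Fm.neg (Fm.var p)} {Fm.var p} := by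
  intro h
  obtain ⟨B, rfl, hB⟩ := h (fun _ => V4.f) fun A hA => by rw [hA]; exact hf
  exact V4.not_desig_f hB

end Matrix

/-- for every strongly regular four-valued matrix M, the induced
consequence relation lies strictly between that of positive classical logic and
that of classical logic: ⊨_{CL⁺} ⊊ ⊨_M ⊊ ⊨_{CL}; moreover, for every variable
`p`, `{p} ⊭_M {¬p}` and `{¬p} ⊭_M {p}`. -/
theorem stmt17 (In : V4 → V4) (Ia Io Ii : V4 → V4 → V4)
    -- the designation conditions of a strongly regular four-valued matrix
    (hneg : ∀ a, V4.desig (In a) ↔ (a = V4.f ∨ a = V4.b))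
    (hand : ∀ a₁ a₂, V4.desig (Ia a₁ a₂) ↔ (V4.desig a₁ ∧ V4.desig a₂))
    (hor : ∀ a₁ a₂, V4.desig (Io a₁ a₂) ↔ (V4.desig a₁ ∨ V4.desig a₂))
    (himp : ∀ a₁ a₂, V4.desig (Ii a₁ a₂) ↔ (¬ V4.desig a₁ ∨ V4.desig a₂))
    -- {t, f} is closed under all four non-nullary truth functions
    (hcn : ∀ a, (a = V4.t ∨ a = V4.f) → (In a = V4.t ∨ In a = V4.f))
    (hca : ∀ a₁ a₂, (a₁ = V4.t ∨ a₁ = V4.f) → (a₂ = V4.t ∨ a₂ = V4.f) →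
      (Ia a₁ a₂ = V4.t ∨ Ia a₁ a₂ = V4.f))
    (hco : ∀ a₁ a₂, (a₁ = V4.t ∨ a₁ = V4.f) → (a₂ = V4.t ∨ a₂ = V4.f) →
      (Io a₁ a₂ = V4.t ∨ Io a₁ a₂ = V4.f))
    (hci : ∀ a₁ a₂, (a₁ = V4.t ∨ a₁ = V4.f) → (a₂ = V4.t ∨ a₂ = V4.f) →
      (Ii a₁ a₂ = V4.t ∨ Ii a₁ a₂ = V4.f)) :
    (∀ Γ Δ : Set Fm, ConCLp Γ Δ → ConM In Ia Io Ii Γ Δ) ∧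
    (∃ Γ Δ : Set Fm, ConM In Ia Io Ii Γ Δ ∧ ¬ ConCLp Γ Δ) ∧
    (∀ Γ Δ : Set Fm, ConM In Ia Io Ii Γ Δ → ConCL Γ Δ) ∧
    (∃ Γ Δ : Set Fm, ConCL Γ Δ ∧ ¬ ConM In Ia Io Ii Γ Δ) ∧
    (∀ p : ℕ,
      ¬ ConM In Ia Io Ii {Fm.var p} {Fm.neg (Fm.var p)} ∧
      ¬ ConM In Ia Io Ii {Fm.neg (Fm.var p)} {Fm.var p}) := by
  have hf : V4.desig (In V4.f) := (hneg _).2 (Or.inl rfl)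
  have hb : V4.desig (In V4.b) := (hneg _).2 (Or.inr rfl)
  have ht : ¬ V4.desig (In V4.t) := by simp [hneg]
  exact ⟨fun _ _ => conM_of_conCLp hand hor himp,
    ⟨∅, {Fm.neg Fm.bot}, conM_empty_neg_bot hf, not_conCLp_empty_neg_bot⟩,
    fun _ _ => conCL_of_conM (valM_ofBool_comp hneg hand hor himp hcn hca hco hci),
    ⟨_, ∅, conCL_and_neg_var_empty 0, not_conM_and_neg_var_empty hb hand 0⟩,
    fun p => ⟨not_conM_var_neg_var ht p, not_conM_neg_var_var hf p⟩⟩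

end BD17
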